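/- arXiv:2010.10010 — 4 statements merged into one kernel-verified Lean document; each statement's English description precedes it below -/
import Mathlib

section
/- (Minimum-distance lemma for the fast-fading converse.) Fix A > 0, σ > 0, a probability measure ν on ℝ with finite second moment, reals λ₁, λ₂ ≥ 0 with λ₁ + λ₂ < 1, and b > 0. Then there exists n₀ such that for all n ≥ n₀ the following holds: if u₁, u₂ ∈ ℝⁿ satisfy ‖u₁‖² ≤ nA and ‖u₂‖² ≤ nA, and there is a decoding-region family D (sets D_g ⊆ ℝⁿ indexed by g ∈ ℝⁿ with {(g,y) : y ∈ D_g} measurable) such that P(u₁, D) ≥ 1 − λ₁ and P(u₂, D) ≤ λ₂, then ‖u₁ − u₂‖ ≥ √(n·ε_n) = √A·n^{-(1+2b)/2}, where ε_n = A·n^{-2(1+b)}. -/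
open MeasureTheory ProbabilityTheory

/-- The `n`-fold product of the Gaussian measure `N(0,σ²)` on `ℝ`. -/
noncomputable def gaussPi (n : ℕ) (σ : ℝ) : Measure (Fin n → ℝ) :=
  Measure.pi fun _ => gaussianReal 0 ⟨σ ^ 2, sq_nonneg σ⟩

/-- Acceptance probability of a codeword `u` for the decoding-region family
`D` (indexed by the fading realization `g`) over the fast-fading Gaussian
channel: `P(u,D) = ∫ P_Z(g∘u + Z ∈ D_g) dν^⊗n(g)`. -/
noncomputable def accProb (n : ℕ) (σ : ℝ) (ν : Measure ℝ)
    (u : Fin n → ℝ) (D : (Fin n → ℝ) → Set (Fin n → ℝ)) : ℝ :=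
  ∫ g, (gaussPi n σ {z : Fin n → ℝ | (fun t => g t * u t + z t) ∈ D g}).toReal
    ∂(Measure.pi fun _ : Fin n => ν)

/-!
For a fixed fading realization `g`, the two hypotheses are Gaussian vectors `N(g∘uᵢ, σ²I)`, and
the probabilities they give to the same decoding region differ by at most their total variation
distance. Bounding that by the square root of the `χ²`-divergence `exp (‖g∘(u₁ - u₂)‖² / σ²) - 1`
(and by `1`) gives `√2 ‖g∘(u₁ - u₂)‖ / σ`. Averaging over `g` with Jensen's inequality,
`1 - λ₁ - λ₂ ≤ √(2 E[g²]) / σ · ‖u₁ - u₂‖`, so a distance of order `n^{-(1+2b)/2} → 0` is too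
small once `n` is large.
-/

open Real NNReal Filter Topology

section ChiSquare

variable {α : Type*} [MeasurableSpace α] {μ ν : Measure α} {f : α → ℝ}

lemma memLp_two_sqrt (hf0 : ∀ x, 0 ≤ f x) (hf : Integrable f μ) :
    MemLp (fun x => √(f x)) 2 μ := by
  refine (memLp_two_iff_integrable_sq hf.aemeasurable.sqrt.aestronglyMeasurable).2 ?_
  simpa only [sq_sqrt (hf0 _)] using hf

lemma integral_sqrt_le_sqrt_integral [IsProbabilityMeasure μ] (hf0 : ∀ x, 0 ≤ f x)
    (hf : Integrable f μ) : ∫ x, √(f x) ∂μ ≤ √(∫ x, f x ∂μ) := by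
  have hsq : (fun x => √(f x) ^ 2) = f := funext fun x => sq_sqrt (hf0 x)
  have hvar := variance_nonneg (fun x => √(f x)) μ
  rw [variance_eq_sub (memLp_two_sqrt hf0 hf)] at hvar
  simp only [Pi.pow_apply, hsq] at hvar
  exact le_sqrt_of_sq_le (by linarith)

lemma integrable_and_integral_eq_one_of_eq_withDensity [IsProbabilityMeasure ν]
    (hν : ν = μ.withDensity fun x => ENNReal.ofReal (f x)) (hf0 : ∀ x, 0 ≤ f x)
    (hf : Measurable f) : Integrable f μ ∧ ∫ x, f x ∂μ = 1 := by
  have hlint : ∫⁻ x, ENNReal.ofReal (f x) ∂μ = 1 := by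
    rw [← setLIntegral_univ, ← withDensity_apply _ MeasurableSet.univ, ← hν, measure_univ]
  refine ⟨⟨hf.aestronglyMeasurable, ?_⟩, ?_⟩
  · rw [hasFiniteIntegral_iff_ofReal (ae_of_all _ hf0), hlint]
    exact ENNReal.one_lt_top
  · rw [integral_eq_lintegral_of_nonneg_ae (ae_of_all _ hf0) hf.aestronglyMeasurable, hlint,
      ENNReal.toReal_one]

lemma abs_measureReal_sub_le_sqrt_chiSq [IsProbabilityMeasure μ] [IsProbabilityMeasure ν]
    (hν : ν = μ.withDensity fun x => ENNReal.ofReal (f x)) (hf0 : ∀ x, 0 ≤ f x)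
    (hf : Measurable f) (hf2 : Integrable (fun x => f x ^ 2) μ) {s : Set α}
    (hs : MeasurableSet s) : |ν.real s - μ.real s| ≤ √(∫ x, f x ^ 2 ∂μ - 1) := by
  obtain ⟨hfi, hf1⟩ := integrable_and_integral_eq_one_of_eq_withDensity hν hf0 hf
  have hνs : ν.real s = ∫ x in s, f x ∂μ := by
    rw [hν, measureReal_def, withDensity_apply _ hs,
      ← ofReal_integral_eq_lintegral_ofReal hfi.restrict (ae_of_all _ hf0),
      ENNReal.toReal_ofReal (setIntegral_nonneg hs fun x _ => hf0 x)]
  have hsq : Integrable (fun x => (f x - 1) ^ 2) μ := by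
    have := (hf2.sub (hfi.const_mul 2)).add (integrable_const (1 : ℝ))
    exact this.congr (ae_of_all _ fun x => by simp only [Pi.add_apply, Pi.sub_apply]; ring)
  -- `∫ (f - 1)²` is the variance of `f`, whose mean is `1`.
  have hvar : ∫ x, (f x - 1) ^ 2 ∂μ = ∫ x, f x ^ 2 ∂μ - 1 := by
    have := variance_eq_integral hfi.1.aemeasurable (μ := μ)
    rw [variance_eq_sub ((memLp_two_iff_integrable_sq hfi.1).2 hf2)] at this
    simp only [Pi.pow_apply, hf1] at this
    linarith
  calc |ν.real s - μ.real s| = |∫ x in s, (f x - 1) ∂μ| := by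
        rw [hνs, integral_sub hfi.restrict (integrable_const 1), setIntegral_const,
          smul_eq_mul, mul_one]
    _ ≤ ∫ x in s, |f x - 1| ∂μ := abs_integral_le_integral_abs
    _ ≤ ∫ x, |f x - 1| ∂μ :=
        setIntegral_le_integral (hfi.sub (integrable_const 1)).abs
          (ae_of_all _ fun x => abs_nonneg _)
    _ = ∫ x, √((f x - 1) ^ 2) ∂μ := by simp only [sqrt_sq_eq_abs]
    _ ≤ √(∫ x, (f x - 1) ^ 2 ∂μ) := integral_sqrt_le_sqrt_integral (fun x => sq_nonneg _) hsq
    _ = √(∫ x, f x ^ 2 ∂μ - 1) := by rw [hvar]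

end ChiSquare

lemma MeasureTheory.Measure.pi_withDensity_ofReal {ι α : Type*} [Fintype ι] [MeasurableSpace α]
    {μ : ι → Measure α} [∀ i, SigmaFinite (μ i)] {f : ι → α → ℝ} (hf0 : ∀ i x, 0 ≤ f i x)
    (hf : ∀ i, Integrable (f i) (μ i)) :
    Measure.pi (fun i => (μ i).withDensity fun x => ENNReal.ofReal (f i x))
      = (Measure.pi μ).withDensity fun x => ENNReal.ofReal (∏ i, f i (x i)) := by
  have := fun i => isFiniteMeasure_withDensity_ofReal (hf i).2
  refine Measure.pi_eq fun s hs => ?_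
  rw [withDensity_apply _ (.univ_pi hs), Measure.restrict_pi_pi,
    ← ofReal_integral_eq_lintegral_ofReal (Integrable.fintype_prod fun i => (hf i).restrict)
      (ae_of_all _ fun x => Finset.prod_nonneg fun i _ => hf0 i (x i)),
    integral_fintype_prod_eq_prod,
    ENNReal.ofReal_prod_of_nonneg fun i _ => setIntegral_nonneg (hs i) fun x _ => hf0 i x]
  refine Finset.prod_congr rfl fun i _ => ?_
  rw [withDensity_apply _ (hs i),
    ofReal_integral_eq_lintegral_ofReal (hf i).restrict (ae_of_all _ (hf0 i))]

/-- The density of `N(m, v)` with respect to `N(0, v)`. -/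
noncomputable def gaussianLikelihoodRatio (v : ℝ≥0) (m x : ℝ) : ℝ :=
  exp ((2 * x * m - m ^ 2) / (2 * v))

section LikelihoodRatio

variable {v : ℝ≥0} {m x : ℝ}

lemma gaussianLikelihoodRatio_nonneg : 0 ≤ gaussianLikelihoodRatio v m x := (exp_pos _).le

@[fun_prop]
lemma measurable_gaussianLikelihoodRatio : Measurable (gaussianLikelihoodRatio v m) := by
  unfold gaussianLikelihoodRatio; fun_prop

lemma gaussianLikelihoodRatio_sq :
    gaussianLikelihoodRatio v m x ^ 2 = exp (m ^ 2 / v) * gaussianLikelihoodRatio v (2 * m) x := by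
  unfold gaussianLikelihoodRatio
  rw [← exp_nat_mul, ← exp_add]
  ring_nf

lemma gaussianPDFReal_mul_gaussianLikelihoodRatio (hv : v ≠ 0) :
    gaussianPDFReal 0 v x * gaussianLikelihoodRatio v m x = gaussianPDFReal m v x := by
  have hv' : (v : ℝ) ≠ 0 := by exact_mod_cast hv
  simp only [gaussianPDFReal, gaussianLikelihoodRatio, mul_assoc, ← exp_add]
  congr 2
  field_simp
  ring

lemma gaussianReal_eq_withDensity_likelihoodRatio (hv : v ≠ 0) (m : ℝ) :
    gaussianReal m v
      = (gaussianReal 0 v).withDensity fun x => ENNReal.ofReal (gaussianLikelihoodRatio v m x) := by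
  rw [gaussianReal_of_var_ne_zero 0 hv, gaussianReal_of_var_ne_zero m hv,
    ← withDensity_mul _ (measurable_gaussianPDF 0 v) (by fun_prop)]
  congr 1
  ext x
  simp only [Pi.mul_apply, gaussianPDF, ← ENNReal.ofReal_mul (gaussianPDFReal_nonneg 0 v x),
    gaussianPDFReal_mul_gaussianLikelihoodRatio hv]

end LikelihoodRatio

lemma min_one_sqrt_exp_sub_one_le {x : ℝ} (hx : 0 ≤ x) : min 1 √(exp x - 1) ≤ √(2 * x) := by
  rcases le_or_gt x (1 / 2) with hx2 | hx2
  · refine (min_le_right _ _).trans (sqrt_le_sqrt ?_)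
    have hexp := exp_bound_div_one_sub_of_interval hx (by linarith)
    rw [le_div_iff₀ (by linarith)] at hexp
    nlinarith [add_one_le_exp x]
  · exact (min_le_left _ _).trans (by rw [← Real.sqrt_one]; exact sqrt_le_sqrt (by linarith))

section GaussianShift

variable {ι : Type*} [Fintype ι] {v : ℝ≥0}

lemma pi_gaussianReal_map_add (w : ι → ℝ) :
    (Measure.pi fun _ : ι => gaussianReal 0 v).map (w + ·)
      = Measure.pi fun t => gaussianReal (w t) v := by
  have := Measure.pi_map_pi (μ := fun _ : ι => gaussianReal 0 v)
    (f := fun t => (w t + ·)) fun t => by fun_prop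
  simp only [gaussianReal_map_const_add, zero_add] at this
  exact this

lemma pi_gaussianReal_eq_withDensity (hv : v ≠ 0) (w : ι → ℝ) :
    Measure.pi (fun t => gaussianReal (w t) v)
      = (Measure.pi fun _ => gaussianReal 0 v).withDensity fun z =>
          ENNReal.ofReal (∏ t, gaussianLikelihoodRatio v (w t) (z t)) := by
  have hdens := fun t => gaussianReal_eq_withDensity_likelihoodRatio hv (w t)
  simp_rw [hdens]
  exact Measure.pi_withDensity_ofReal (fun t x => gaussianLikelihoodRatio_nonneg)
    fun t => (integrable_and_integral_eq_one_of_eq_withDensity (hdens t)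
      (fun x => gaussianLikelihoodRatio_nonneg) measurable_gaussianLikelihoodRatio).1

lemma abs_pi_gaussianReal_real_preimage_add_sub_le (hv : v ≠ 0) (w : ι → ℝ)
    {s : Set (ι → ℝ)} (hs : MeasurableSet s) :
    |(Measure.pi fun _ => gaussianReal 0 v).real ((w + ·) ⁻¹' s)
        - (Measure.pi fun _ => gaussianReal 0 v).real s|
      ≤ √(2 * (∑ t, w t ^ 2) / v) := by
  set P := Measure.pi fun _ : ι => gaussianReal 0 v
  let R (w z : ι → ℝ) := ∏ t, gaussianLikelihoodRatio v (w t) (z t)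
  have hR0 (w : ι → ℝ) z : 0 ≤ R w z :=
    Finset.prod_nonneg fun t _ => gaussianLikelihoodRatio_nonneg
  have hRm (w : ι → ℝ) : Measurable (R w) := by fun_prop
  have hR (w : ι → ℝ) : Integrable (R w) P ∧ ∫ z, R w z ∂P = 1 :=
    integrable_and_integral_eq_one_of_eq_withDensity (pi_gaussianReal_eq_withDensity hv w)
      (hR0 w) (hRm w)
  have hsq (z : ι → ℝ) : R w z ^ 2 = exp ((∑ t, w t ^ 2) / v) * R (fun t => 2 * w t) z := by
    simp only [R, ← Finset.prod_pow, gaussianLikelihoodRatio_sq, Finset.prod_mul_distrib,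
      ← exp_sum, Finset.sum_div]
  have hsq_integral : ∫ z, R w z ^ 2 ∂P = exp ((∑ t, w t ^ 2) / v) := by
    simp_rw [hsq]; rw [integral_const_mul, (hR _).2, mul_one]
  have hsq_int : Integrable (fun z => R w z ^ 2) P := by
    simp_rw [hsq]; exact (hR _).1.const_mul _
  have hchi := abs_measureReal_sub_le_sqrt_chiSq (pi_gaussianReal_eq_withDensity hv w)
    (hR0 w) (hRm w) hsq_int hs
  rw [hsq_integral, ← pi_gaussianReal_map_add, map_measureReal_apply (by fun_prop) hs] at hchi
  have htriv : |P.real ((w + ·) ⁻¹' s) - P.real s| ≤ 1 := by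
    rw [abs_sub_le_iff]
    constructor <;> linarith [measureReal_le_one (μ := P) (s := s),
      measureReal_le_one (μ := P) (s := (w + ·) ⁻¹' s), measureReal_nonneg (μ := P) (s := s),
      measureReal_nonneg (μ := P) (s := (w + ·) ⁻¹' s)]
  calc _ ≤ min 1 √(exp ((∑ t, w t ^ 2) / v) - 1) := le_min htriv hchi
    _ ≤ √(2 * ((∑ t, w t ^ 2) / v)) := min_one_sqrt_exp_sub_one_le (by positivity)
    _ = √(2 * (∑ t, w t ^ 2) / v) := by rw [mul_div_assoc]

end GaussianShift

noncomputable def condAccProb (n : ℕ) (σ : ℝ) (u : Fin n → ℝ)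
    (D : (Fin n → ℝ) → Set (Fin n → ℝ)) (g : Fin n → ℝ) : ℝ :=
  (gaussPi n σ {z : Fin n → ℝ | (fun t => g t * u t + z t) ∈ D g}).toReal

-- Inside `gaussPi` the variance `⟨σ ^ 2, _⟩` is elaborated as an element of the
-- subtype `{r // 0 ≤ r}`, on which the instance for `gaussianReal` is not found.
instance instIsProbabilityMeasureGaussPi (n : ℕ) (σ : ℝ) :
    IsProbabilityMeasure (gaussPi n σ) := by
  have (_ : Fin n) := instIsProbabilityMeasureGaussianReal 0 ⟨σ ^ 2, sq_nonneg σ⟩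
  unfold gaussPi; infer_instance

section Channel

variable {n : ℕ} {σ : ℝ} {D : (Fin n → ℝ) → Set (Fin n → ℝ)}

lemma measurable_condAccProb (hD : MeasurableSet {p : (Fin n → ℝ) × (Fin n → ℝ) | p.2 ∈ D p.1})
    (u : Fin n → ℝ) : Measurable (condAccProb n σ u D) := by
  have : Measurable fun p : (Fin n → ℝ) × (Fin n → ℝ) => (p.1, p.1 * u + p.2) := by fun_prop
  exact (measurable_measure_prodMk_left (hD.preimage this)).ennreal_toReal

lemma abs_condAccProb_sub_le (hσ : 0 < σ)
    (hD : MeasurableSet {p : (Fin n → ℝ) × (Fin n → ℝ) | p.2 ∈ D p.1}) (u₁ u₂ g : Fin n → ℝ) :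
    |condAccProb n σ u₁ D g - condAccProb n σ u₂ D g|
      ≤ √(2 * (∑ t, (g t * (u₁ t - u₂ t)) ^ 2) / σ ^ 2) := by
  have hv : (⟨σ ^ 2, sq_nonneg σ⟩ : ℝ≥0) ≠ 0 := fun h =>
    (pow_pos hσ 2).ne' (congrArg Subtype.val h)
  have hs : MeasurableSet ((g * u₂ + ·) ⁻¹' D g) :=
    (hD.preimage measurable_prodMk_left).preimage (by fun_prop)
  have hshift : {z : Fin n → ℝ | (fun t => g t * u₁ t + z t) ∈ D g}
      = (g * (u₁ - u₂) + ·) ⁻¹' ((g * u₂ + ·) ⁻¹' D g) := by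
    ext z
    simp only [Set.mem_ofPred_eq, Set.mem_preimage]
    congr! 1
    funext t
    simp only [Pi.add_apply, Pi.mul_apply, Pi.sub_apply]
    ring
  rw [condAccProb, condAccProb, hshift]
  exact abs_pi_gaussianReal_real_preimage_add_sub_le hv _ hs

lemma accProb_sub_le (hσ : 0 < σ)
    (hD : MeasurableSet {p : (Fin n → ℝ) × (Fin n → ℝ) | p.2 ∈ D p.1})
    (ν : Measure ℝ) [IsProbabilityMeasure ν] (hm : Integrable (fun x => x ^ 2) ν)
    (u₁ u₂ : Fin n → ℝ) :
    accProb n σ ν u₁ D - accProb n σ ν u₂ D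
      ≤ √(2 * (∫ x, x ^ 2 ∂ν) / σ ^ 2) * √(∑ t, (u₁ t - u₂ t) ^ 2) := by
  have hacc (u : Fin n → ℝ) : Integrable (condAccProb n σ u D) (Measure.pi fun _ => ν) :=
    .of_bound (measurable_condAccProb hD u).aestronglyMeasurable 1 (ae_of_all _ fun g => by
      rw [norm_eq_abs, condAccProb, abs_of_nonneg ENNReal.toReal_nonneg]
      exact measureReal_le_one)
  set h : (Fin n → ℝ) → ℝ := fun g => 2 * (∑ t, (g t * (u₁ t - u₂ t)) ^ 2) / σ ^ 2
  have h0 g : 0 ≤ h g := by positivity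
  have hterm (t : Fin n) :
      Integrable (fun g : Fin n → ℝ => (g t * (u₁ t - u₂ t)) ^ 2) (Measure.pi fun _ => ν) := by
    simp_rw [mul_pow]
    exact (integrable_comp_eval (f := fun x => x ^ 2) hm).mul_const _
  have hh : Integrable h (Measure.pi fun _ => ν) :=
    ((integrable_finsetSum _ fun t _ => hterm t).const_mul 2).div_const _
  have hh_integral : ∫ g, h g ∂(Measure.pi fun _ => ν)
      = 2 * ((∫ x, x ^ 2 ∂ν) * ∑ t, (u₁ t - u₂ t) ^ 2) / σ ^ 2 := by
    have hterm_integral (t : Fin n) : ∫ g, (g t * (u₁ t - u₂ t)) ^ 2 ∂(Measure.pi fun _ => ν)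
        = (∫ x, x ^ 2 ∂ν) * (u₁ t - u₂ t) ^ 2 := by
      simp_rw [mul_pow]
      rw [integral_mul_const, integral_comp_eval (f := fun x => x ^ 2) hm.aestronglyMeasurable]
    rw [integral_div, integral_const_mul, integral_finsetSum _ fun t _ => hterm t]
    simp_rw [hterm_integral, ← Finset.mul_sum]
  calc accProb n σ ν u₁ D - accProb n σ ν u₂ D
      = ∫ g, (condAccProb n σ u₁ D g - condAccProb n σ u₂ D g) ∂(Measure.pi fun _ => ν) :=
        (integral_sub (hacc u₁) (hacc u₂)).symm
    _ ≤ ∫ g, √(h g) ∂(Measure.pi fun _ => ν) :=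
        integral_mono ((hacc u₁).sub (hacc u₂)) ((memLp_two_sqrt h0 hh).integrable one_le_two)
          fun g => (le_abs_self _).trans (abs_condAccProb_sub_le hσ hD u₁ u₂ g)
    _ ≤ √(∫ g, h g ∂(Measure.pi fun _ => ν)) := integral_sqrt_le_sqrt_integral h0 hh
    _ = _ := by
        have hM : 0 ≤ ∫ x, x ^ 2 ∂ν := integral_nonneg fun x => sq_nonneg x
        rw [hh_integral, ← Real.sqrt_mul (by positivity)]
        ring_nf

end Channel

theorem fastFading_minimum_distance_general
    (A σ : ℝ) (hσ : 0 < σ)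
    (ν : Measure ℝ) [IsProbabilityMeasure ν]
    (hm : Integrable (fun g : ℝ => g ^ 2) ν)
    (lam₁ lam₂ b : ℝ)
    (hlam : lam₁ + lam₂ < 1) (hb : 0 < b) :
    ∃ n₀ : ℕ, ∀ n ≥ n₀, ∀ u₁ u₂ : Fin n → ℝ,
      (∑ t, u₁ t ^ 2 ≤ (n : ℝ) * A) → (∑ t, u₂ t ^ 2 ≤ (n : ℝ) * A) →
      ∀ D : (Fin n → ℝ) → Set (Fin n → ℝ),
        MeasurableSet {p : (Fin n → ℝ) × (Fin n → ℝ) | p.2 ∈ D p.1} →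
        1 - lam₁ ≤ accProb n σ ν u₁ D →
        accProb n σ ν u₂ D ≤ lam₂ →
        Real.sqrt A * (n : ℝ) ^ (-(1 + 2 * b) / 2) ≤
          Real.sqrt (∑ t, (u₁ t - u₂ t) ^ 2) := by
  set C := √(2 * (∫ x, x ^ 2 ∂ν) / σ ^ 2)
  have hdecay : Tendsto (fun n : ℕ => C * (√A * (n : ℝ) ^ (-(1 + 2 * b) / 2))) atTop (𝓝 0) := by
    have := ((tendsto_rpow_neg_atTop (by linarith : 0 < (1 + 2 * b) / 2)).comp
      tendsto_natCast_atTop_atTop).const_mul √A |>.const_mul C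
    rw [mul_zero, mul_zero] at this
    simpa only [neg_div, Function.comp_def] using this
  obtain ⟨n₀, hn₀⟩ := eventually_atTop.1 (hdecay.eventually_lt_const (sub_pos.2 hlam))
  refine ⟨n₀, fun n hn u₁ u₂ _ _ D hD h₁ h₂ => ?_⟩
  by_contra! hclose
  have hsep := accProb_sub_le hσ hD ν hm u₁ u₂
  have := mul_le_mul_of_nonneg_left hclose.le (sqrt_nonneg _ : 0 ≤ C)
  linarith [hn₀ n hn]

/-- Minimum-distance lemma for the fast-fading converse: for all large `n`,
two codewords of power at most `nA` that can be distinguished by a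
decoding-region family with error sum less than `1` must be at Euclidean
distance at least `√(n·ε_n) = √A·n^{-(1+2b)/2}`, where `ε_n = A·n^{-2(1+b)}`. -/
theorem fastFading_minimum_distance
    (A σ : ℝ) (hA : 0 < A) (hσ : 0 < σ)
    (ν : Measure ℝ) [IsProbabilityMeasure ν]
    (hm : Integrable (fun g : ℝ => g ^ 2) ν)
    (lam₁ lam₂ b : ℝ) (hlam₁ : 0 ≤ lam₁) (hlam₂ : 0 ≤ lam₂)
    (hlam : lam₁ + lam₂ < 1) (hb : 0 < b) :
    ∃ n₀ : ℕ, ∀ n ≥ n₀, ∀ u₁ u₂ : Fin n → ℝ,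
      (∑ t, u₁ t ^ 2 ≤ (n : ℝ) * A) → (∑ t, u₂ t ^ 2 ≤ (n : ℝ) * A) →
      ∀ D : (Fin n → ℝ) → Set (Fin n → ℝ),
        MeasurableSet {p : (Fin n → ℝ) × (Fin n → ℝ) | p.2 ∈ D p.1} →
        1 - lam₁ ≤ accProb n σ ν u₁ D →
        accProb n σ ν u₂ D ≤ lam₂ →
        Real.sqrt A * (n : ℝ) ^ (-(1 + 2 * b) / 2) ≤
          Real.sqrt (∑ t, (u₁ t - u₂ t) ^ 2) :=
  fastFading_minimum_distance_general A σ hσ ν hm lam₁ lam₂ b hlam hb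
end

section
/- (Minimum-distance lemma for the slow-fading converse.) Fix A > 0, σ > 0, Γ > 0, a nonempty set 𝒢 ⊆ [−Γ, Γ], reals λ₁, λ₂ ≥ 0 with λ₁ + λ₂ < 1, and b > 0. Then there exists n₀ such that for all n ≥ n₀ the following holds: if u₁, u₂ ∈ ℝⁿ satisfy ‖u₁‖² ≤ nA and ‖u₂‖² ≤ nA, and there is a decoding-region family D (sets D_g ⊆ ℝⁿ indexed by g ∈ ℝ with {(g,y) : y ∈ D_g} measurable) such that for every g ∈ 𝒢 one has P_g(u₁, D) ≥ 1 − λ₁ and P_g(u₂, D) ≤ λ₂, then ‖u₁ − u₂‖ ≥ √(n·ε_n) = √A·n^{-(1+2b)/2}, where ε_n = A·n^{-2(1+b)}. -/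
/-!
Fix one gain `g ∈ 𝒢`. The region `D_g` accepts `u₁` with probability at least `1 - λ₁` and `u₂`
with probability at most `λ₂`, so the output laws `N(g u₁, σ²I)` and `N(g u₂, σ²I)` are at total
variation distance at least `1 - λ₁ - λ₂`. Total variation is subadditive over products, and two
one-dimensional Gaussians of variance `σ²` whose means differ by `d` are at total variation
distance at most `d / √(2πσ²)`: their densities cross at the midpoint of the means, and the
Gaussian density is bounded by `1 / √(2πσ²)`. With Cauchy–Schwarz this gives
`1 - λ₁ - λ₂ ≤ Γ √n ‖u₁ - u₂‖ / √(2πσ²)`, while `√n · √A n^{-(1+2b)/2} = √A n^{-b} → 0`.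
-/

open MeasureTheory ProbabilityTheory

/-- Acceptance probability of a codeword `u` at the fading gain `g` for the
decoding-region family `D` over the slow-fading Gaussian channel:
`P_g(u,D) = P_Z(g·u + Z ∈ D_g)`. -/
noncomputable def accProbSlow (n : ℕ) (σ : ℝ) (g : ℝ)
    (u : Fin n → ℝ) (D : ℝ → Set (Fin n → ℝ)) : ℝ :=
  (gaussPi n σ {z : Fin n → ℝ | (fun t => g * u t + z t) ∈ D g}).toReal

open Real Filter Topology
open scoped NNReal ENNReal

/-- For probability measures: the total variation distance from `μ` to `ν` is at most `δ`. Testing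
against `[0,1]`-valued functions rather than sets is what lets the bound pass to products. -/
def TVDistLE {X : Type*} [MeasurableSpace X] (μ ν : Measure X) (δ : ℝ) : Prop :=
  ∀ f : X → ℝ, Measurable f → (∀ x, f x ∈ Set.Icc 0 1) → ∫ x, f x ∂μ - ∫ x, f x ∂ν ≤ δ

namespace TVDistLE

variable {X Y : Type*} [MeasurableSpace X] [MeasurableSpace Y]

theorem measureReal_sub_le {μ ν : Measure X} [IsFiniteMeasure μ] [IsFiniteMeasure ν] {δ : ℝ}
    (h : TVDistLE μ ν δ) {s : Set X} (hs : MeasurableSet s) : μ.real s - ν.real s ≤ δ := by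
  have := h (s.indicator 1) (measurable_const.indicator hs) fun x => by
    by_cases hx : x ∈ s <;> simp [hx]
  rwa [integral_indicator_one hs, integral_indicator_one hs] at this

theorem map {μ ν : Measure X} {δ : ℝ} (h : TVDistLE μ ν δ) {φ : X → Y} (hφ : Measurable φ) :
    TVDistLE (μ.map φ) (ν.map φ) δ := fun f hf hf01 => by
  rw [integral_map hφ.aemeasurable hf.aestronglyMeasurable,
    integral_map hφ.aemeasurable hf.aestronglyMeasurable]
  exact h (f ∘ φ) (hf.comp hφ) fun x => hf01 (φ x)

theorem prod {μ₁ ν₁ : Measure X} {μ₂ ν₂ : Measure Y} [IsProbabilityMeasure μ₁]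
    [IsProbabilityMeasure ν₁] [IsProbabilityMeasure μ₂] [IsProbabilityMeasure ν₂] {δ₁ δ₂ : ℝ}
    (h₁ : TVDistLE μ₁ ν₁ δ₁) (h₂ : TVDistLE μ₂ ν₂ δ₂) :
    TVDistLE (μ₁.prod μ₂) (ν₁.prod ν₂) (δ₁ + δ₂) := by
  intro f hf hf01
  have hsection : ∀ (ρ : Measure Y) [IsProbabilityMeasure ρ] (x : X),
      ∫ y, f (x, y) ∂ρ ∈ Set.Icc 0 1 := fun ρ _ x =>
    ⟨integral_nonneg fun y => (hf01 _).1, by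
      simpa using integral_mono
        (Integrable.of_mem_Icc (μ := ρ) 0 1 (hf.comp measurable_prodMk_left).aemeasurable
          (ae_of_all _ fun y => hf01 (x, y)))
        (integrable_const (1 : ℝ)) fun y => (hf01 (x, y)).2⟩
  have hmeas : ∀ (ρ : Measure Y) [SFinite ρ], Measurable fun x => ∫ y, f (x, y) ∂ρ := fun ρ _ =>
    hf.stronglyMeasurable.integral_prod_right'.measurable
  have hint₁ : ∀ (ρ : Measure Y) [IsProbabilityMeasure ρ],
      Integrable (fun x => ∫ y, f (x, y) ∂ρ) μ₁ :=
    fun ρ _ => Integrable.of_mem_Icc 0 1 (hmeas ρ).aemeasurable (ae_of_all _ (hsection ρ))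
  have hfirst : ∫ x, ∫ y, f (x, y) ∂μ₂ ∂μ₁ ≤ ∫ x, ∫ y, f (x, y) ∂ν₂ ∂μ₁ + δ₂ := by
    calc ∫ x, ∫ y, f (x, y) ∂μ₂ ∂μ₁ ≤ ∫ x, (∫ y, f (x, y) ∂ν₂ + δ₂) ∂μ₁ :=
          integral_mono (hint₁ μ₂) ((hint₁ ν₂).add (integrable_const δ₂))
            fun x => by
              have := h₂ _ (hf.comp measurable_prodMk_left) fun y => hf01 (x, y)
              simp only [Function.comp_def] at this
              linarith
      _ = _ := by rw [integral_add (hint₁ ν₂) (integrable_const δ₂)]; simp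
  have hsecond := h₁ _ (hmeas ν₂) (hsection ν₂)
  have hint : ∀ (ρ : Measure (X × Y)) [IsFiniteMeasure ρ], Integrable f ρ := fun ρ _ =>
    Integrable.of_mem_Icc 0 1 hf.aemeasurable (ae_of_all _ hf01)
  rw [integral_prod f (hint _), integral_prod f (hint _)]
  linarith

theorem pi {n : ℕ} {α : Fin n → Type*} [∀ i, MeasurableSpace (α i)] {μ ν : ∀ i, Measure (α i)}
    [∀ i, IsProbabilityMeasure (μ i)] [∀ i, IsProbabilityMeasure (ν i)] {δ : Fin n → ℝ}
    (h : ∀ i, TVDistLE (μ i) (ν i) (δ i)) :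
    TVDistLE (Measure.pi μ) (Measure.pi ν) (∑ i, δ i) := by
  induction n with
  | zero =>
    intro f _ _
    rw [Measure.pi_of_empty μ, Measure.pi_of_empty ν]
    simp
  | succ n ih =>
    have hsplit : ∀ (ρ : ∀ i, Measure (α i)) [∀ i, SigmaFinite (ρ i)], Measure.pi ρ =
        ((ρ 0).prod (Measure.pi fun j => ρ j.succ)).map (MeasurableEquiv.piFinSuccAbove α 0).symm :=
      fun ρ _ => ((measurePreserving_piFinSuccAbove ρ 0).symm _).map_eq.symm
    rw [hsplit μ, hsplit ν, Fin.sum_univ_succ]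
    exact ((h 0).prod (ih fun j => h j.succ)).map (MeasurableEquiv.measurable _)

end TVDistLE

theorem integral_mul_sub_integral_mul_le {α : Type*} [MeasurableSpace α] {μ : Measure α}
    {p q f : α → ℝ} (hp : Integrable p μ) (hq : Integrable q μ) (hf : AEStronglyMeasurable f μ)
    (hf01 : ∀ x, f x ∈ Set.Icc 0 1) :
    ∫ x, p x * f x ∂μ - ∫ x, q x * f x ∂μ ≤ ∫ x, max (p x - q x) 0 ∂μ := by
  have hbdd : ∀ᵐ x ∂μ, ‖f x‖ ≤ 1 := ae_of_all _ fun x => by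
    rw [Real.norm_of_nonneg (hf01 x).1]; exact (hf01 x).2
  rw [← integral_sub (hp.mul_bdd hf hbdd) (hq.mul_bdd hf hbdd)]
  refine integral_mono ((hp.mul_bdd hf hbdd).sub (hq.mul_bdd hf hbdd)) (hp.sub hq).pos_part
    fun x => ?_
  rw [← sub_mul]
  obtain ⟨h0, h1⟩ := hf01 x
  rcases le_total 0 (p x - q x) with h | h
  · rw [max_eq_left h]; exact mul_le_of_le_one_right h h1
  · rw [max_eq_right h]; exact mul_nonpos_of_nonpos_of_nonneg h h0

theorem gaussianPDFReal_le_inv_sqrt (m : ℝ) (v : ℝ≥0) (x : ℝ) :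
    gaussianPDFReal m v x ≤ (√(2 * π * v))⁻¹ := by
  rw [gaussianPDFReal]
  refine mul_le_of_le_one_right (by positivity) (exp_le_one_iff.2 ?_)
  exact div_nonpos_of_nonpos_of_nonneg (neg_nonpos.2 (sq_nonneg _)) (by positivity)

theorem gaussianPDFReal_le_gaussianPDFReal {m₁ m₂ : ℝ} (v : ℝ≥0) {x : ℝ}
    (h : (x - m₁) ^ 2 ≤ (x - m₂) ^ 2) : gaussianPDFReal m₂ v x ≤ gaussianPDFReal m₁ v x := by
  rw [gaussianPDFReal, gaussianPDFReal]
  gcongr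

theorem measureReal_gaussianReal (m : ℝ) {v : ℝ≥0} (hv : v ≠ 0) (s : Set ℝ) :
    (gaussianReal m v).real s = ∫ x in s, gaussianPDFReal m v x := by
  rw [measureReal_def, gaussianReal_apply_eq_integral m hv,
    ENNReal.toReal_ofReal (setIntegral_nonneg_of_ae (ae_of_all _ fun x =>
      gaussianPDFReal_nonneg _ _ _))]

theorem gaussianReal_le_smul_volume (m : ℝ) {v : ℝ≥0} (hv : v ≠ 0) :
    gaussianReal m v ≤ ENNReal.ofReal (√(2 * π * v))⁻¹ • volume := by
  rw [gaussianReal_of_var_ne_zero m hv, ← withDensity_const]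
  exact withDensity_mono (ae_of_all _ fun x =>
    ENNReal.ofReal_le_ofReal (gaussianPDFReal_le_inv_sqrt m v x))

theorem measureReal_gaussianReal_Ioc_le (m : ℝ) {v : ℝ≥0} (hv : v ≠ 0) {a b : ℝ} (hab : a ≤ b) :
    (gaussianReal m v).real (Set.Ioc a b) ≤ (√(2 * π * v))⁻¹ * (b - a) := by
  have h := gaussianReal_le_smul_volume m hv (Set.Ioc a b)
  rw [Measure.smul_apply, Real.volume_Ioc, smul_eq_mul, ← ENNReal.ofReal_mul (by positivity)] at h
  exact ENNReal.toReal_le_of_le_ofReal (by have := sub_nonneg.2 hab; positivity) h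

theorem measureReal_gaussianReal_Iic_sub_le {m₁ m₂ : ℝ} {v : ℝ≥0} (hv : v ≠ 0) (hm : m₁ ≤ m₂)
    (c : ℝ) :
    (gaussianReal m₁ v).real (Set.Iic c) - (gaussianReal m₂ v).real (Set.Iic c) ≤
      (√(2 * π * v))⁻¹ * (m₂ - m₁) := by
  have hshift : (gaussianReal m₁ v).real (Set.Iic c) =
      (gaussianReal m₂ v).real (Set.Iic (c + (m₂ - m₁))) := by
    rw [← add_sub_cancel m₁ m₂, ← gaussianReal_map_add_const,
      map_measureReal_apply (measurable_add_const _) measurableSet_Iic]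
    congr 1
    ext x
    simp
  rw [hshift, ← Set.Iic_union_Ioc_eq_Iic (le_add_of_nonneg_right (sub_nonneg.2 hm)),
    measureReal_union (Set.Iic_disjoint_Ioc le_rfl) measurableSet_Ioc, add_sub_cancel_left]
  simpa using measureReal_gaussianReal_Ioc_le m₂ hv (le_add_of_nonneg_right (sub_nonneg.2 hm))

theorem tvDistLE_gaussianReal_of_le {m₁ m₂ : ℝ} {v : ℝ≥0} (hv : v ≠ 0) (hm : m₁ ≤ m₂) :
    TVDistLE (gaussianReal m₁ v) (gaussianReal m₂ v) ((√(2 * π * v))⁻¹ * (m₂ - m₁)) := by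
  intro f hf hf01
  set c := (m₁ + m₂) / 2 with hc
  have hposPart : (fun x => max (gaussianPDFReal m₁ v x - gaussianPDFReal m₂ v x) 0) =
      (Set.Iic c).indicator fun x => gaussianPDFReal m₁ v x - gaussianPDFReal m₂ v x := by
    ext x
    by_cases hx : x ≤ c
    · rw [Set.indicator_of_mem (Set.mem_Iic.2 hx), max_eq_left (sub_nonneg.2
        (gaussianPDFReal_le_gaussianPDFReal v ?_))]
      nlinarith [mul_nonneg (sub_nonneg.2 hm) (sub_nonneg.2 hx)]
    · rw [Set.indicator_of_notMem (mt Set.mem_Iic.1 hx), max_eq_right (sub_nonpos.2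
        (gaussianPDFReal_le_gaussianPDFReal v ?_))]
      nlinarith [mul_nonneg (sub_nonneg.2 hm) (sub_nonneg.2 (not_le.1 hx).le)]
  calc ∫ x, f x ∂gaussianReal m₁ v - ∫ x, f x ∂gaussianReal m₂ v
      = (∫ x, gaussianPDFReal m₁ v x * f x) - ∫ x, gaussianPDFReal m₂ v x * f x := by
        simp only [integral_gaussianReal_eq_integral_smul hv, smul_eq_mul]
    _ ≤ ∫ x, max (gaussianPDFReal m₁ v x - gaussianPDFReal m₂ v x) 0 :=
        integral_mul_sub_integral_mul_le (integrable_gaussianPDFReal m₁ v)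
          (integrable_gaussianPDFReal m₂ v) hf.aestronglyMeasurable hf01
    _ = (gaussianReal m₁ v).real (Set.Iic c) - (gaussianReal m₂ v).real (Set.Iic c) := by
        rw [hposPart, integral_indicator measurableSet_Iic,
          integral_sub (integrable_gaussianPDFReal m₁ v).integrableOn
            (integrable_gaussianPDFReal m₂ v).integrableOn,
          measureReal_gaussianReal m₁ hv, measureReal_gaussianReal m₂ hv]
    _ ≤ _ := measureReal_gaussianReal_Iic_sub_le hv hm c

theorem tvDistLE_gaussianReal (m₁ m₂ : ℝ) {v : ℝ≥0} (hv : v ≠ 0) :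
    TVDistLE (gaussianReal m₁ v) (gaussianReal m₂ v) ((√(2 * π * v))⁻¹ * |m₁ - m₂|) := by
  rcases le_total m₁ m₂ with hm | hm
  · rw [abs_of_nonpos (sub_nonpos.2 hm), neg_sub]
    exact tvDistLE_gaussianReal_of_le hv hm
  · have h := (tvDistLE_gaussianReal_of_le hv (neg_le_neg hm)).map measurable_neg
    rwa [gaussianReal_map_neg, gaussianReal_map_neg, neg_neg, neg_neg, sub_neg_eq_add,
      neg_add_eq_sub, ← abs_of_nonneg (sub_nonneg.2 hm)] at h

theorem Finset.sum_abs_le_sqrt_card_mul_sqrt_sum_sq {ι : Type*} (s : Finset ι) (f : ι → ℝ) :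
    ∑ i ∈ s, |f i| ≤ √(s.card : ℝ) * √(∑ i ∈ s, f i ^ 2) := by
  rw [← sqrt_mul (Nat.cast_nonneg _),
    le_sqrt (Finset.sum_nonneg fun i _ => abs_nonneg _) (by positivity)]
  simpa only [sq_abs] using sq_sum_le_card_mul_sum_sq (s := s) (f := fun i => |f i|)

theorem measureReal_pi_gaussianReal_sub_le {n : ℕ} {v : ℝ≥0} (hv : v ≠ 0) (m₁ m₂ : Fin n → ℝ)
    {s : Set (Fin n → ℝ)} (hs : MeasurableSet s) :
    (Measure.pi fun t => gaussianReal (m₁ t) v).real s -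
        (Measure.pi fun t => gaussianReal (m₂ t) v).real s ≤
      (√(2 * π * v))⁻¹ * ∑ t, |m₁ t - m₂ t| := by
  rw [Finset.mul_sum]
  exact (TVDistLE.pi fun t => tvDistLE_gaussianReal _ _ hv).measureReal_sub_le hs

theorem measureReal_pi_gaussianReal_translate {n : ℕ} (v : ℝ≥0) (m : Fin n → ℝ)
    {s : Set (Fin n → ℝ)} (hs : MeasurableSet s) :
    (Measure.pi fun _ => gaussianReal 0 v).real {z | (fun t => m t + z t) ∈ s} =
      (Measure.pi fun t => gaussianReal (m t) v).real s := by
  have hshift : MeasurePreserving (fun z : Fin n → ℝ => fun t => m t + z t)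
      (Measure.pi fun _ => gaussianReal 0 v) (Measure.pi fun t => gaussianReal (m t) v) :=
    measurePreserving_pi _ _ fun t => ⟨measurable_const_add _, by
      rw [gaussianReal_map_const_add, zero_add]⟩
  exact hshift.measureReal_preimage hs.nullMeasurableSet

theorem accProbSlow_sub_le {n : ℕ} {σ : ℝ} (hσ : σ ≠ 0) (g : ℝ) (u₁ u₂ : Fin n → ℝ)
    {D : ℝ → Set (Fin n → ℝ)} (hD : MeasurableSet (D g)) :
    accProbSlow n σ g u₁ D - accProbSlow n σ g u₂ D ≤
      (√(2 * π * σ ^ 2))⁻¹ * |g| * ∑ t, |u₁ t - u₂ t| := by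
  have hv : (⟨σ ^ 2, sq_nonneg σ⟩ : ℝ≥0) ≠ 0 := fun h =>
    pow_ne_zero 2 hσ (congrArg NNReal.toReal h)
  have hacc : ∀ u : Fin n → ℝ, accProbSlow n σ g u D =
      (Measure.pi fun t => gaussianReal (g * u t) (⟨σ ^ 2, sq_nonneg σ⟩ : ℝ≥0)).real (D g) :=
    fun u => measureReal_pi_gaussianReal_translate _ (fun t => g * u t) hD
  rw [hacc, hacc]
  refine (measureReal_pi_gaussianReal_sub_le hv _ _ hD).trans_eq ?_
  simp only [← mul_sub, abs_mul, ← Finset.mul_sum, ← mul_assoc]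
  rfl

theorem slowFading_minimum_distance_general
    (A σ Γ : ℝ) (hσ : 0 < σ)
    (𝒢 : Set ℝ) (h𝒢ne : 𝒢.Nonempty) (h𝒢 : 𝒢 ⊆ Set.Icc (-Γ) Γ)
    (lam₁ lam₂ b : ℝ)
    (hlam : lam₁ + lam₂ < 1) (hb : 0 < b) :
    ∃ n₀ : ℕ, ∀ n ≥ n₀, ∀ u₁ u₂ : Fin n → ℝ,
      (∑ t, u₁ t ^ 2 ≤ (n : ℝ) * A) → (∑ t, u₂ t ^ 2 ≤ (n : ℝ) * A) →
      ∀ D : ℝ → Set (Fin n → ℝ),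
        MeasurableSet {p : ℝ × (Fin n → ℝ) | p.2 ∈ D p.1} →
        (∀ g ∈ 𝒢, 1 - lam₁ ≤ accProbSlow n σ g u₁ D ∧
          accProbSlow n σ g u₂ D ≤ lam₂) →
        Real.sqrt A * (n : ℝ) ^ (-(1 + 2 * b) / 2) ≤
          Real.sqrt (∑ t, (u₁ t - u₂ t) ^ 2) := by
  obtain ⟨g, hg⟩ := h𝒢ne
  have hgΓ : |g| ≤ Γ := abs_le.2 (h𝒢 hg)
  set C := (√(2 * π * σ ^ 2))⁻¹
  have hdecay : Tendsto (fun n : ℕ => C * Γ * √A * (n : ℝ) ^ (-b)) atTop (𝓝 0) := by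
    simpa using ((tendsto_rpow_neg_atTop hb).comp tendsto_natCast_atTop_atTop).const_mul
      (C * Γ * √A)
  obtain ⟨n₀, hn₀⟩ := eventually_atTop.1 ((hdecay.eventually_lt_const
    (by linarith : 0 < 1 - lam₁ - lam₂)).and (eventually_gt_atTop 0))
  refine ⟨n₀, fun n hn u₁ u₂ _ _ D hD hacc => ?_⟩
  obtain ⟨hsmall, hnpos⟩ := hn₀ n hn
  have hgap : 1 - lam₁ - lam₂ ≤ C * |g| * ∑ t, |u₁ t - u₂ t| := by
    have hDg : MeasurableSet (D g) := measurable_prodMk_left hD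
    linarith [hacc g hg, accProbSlow_sub_le hσ.ne' g u₁ u₂ hDg]
  have hCS := Finset.univ.sum_abs_le_sqrt_card_mul_sqrt_sum_sq (fun t => u₁ t - u₂ t)
  rw [Finset.card_univ, Fintype.card_fin] at hCS
  have hpow : √(n : ℝ) * (n : ℝ) ^ (-(1 + 2 * b) / 2) = (n : ℝ) ^ (-b) := by
    rw [sqrt_eq_rpow, ← rpow_add (Nat.cast_pos.2 hnpos)]; ring_nf
  by_contra! hclose
  have hCΓ : 0 ≤ C * Γ := mul_nonneg (by positivity) ((abs_nonneg g).trans hgΓ)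
  have hfar : C * |g| * ∑ t, |u₁ t - u₂ t| ≤ C * Γ * √A * (n : ℝ) ^ (-b) :=
    calc C * |g| * ∑ t, |u₁ t - u₂ t|
        ≤ C * Γ * (√(n : ℝ) * (√A * (n : ℝ) ^ (-(1 + 2 * b) / 2))) :=
          mul_le_mul (by gcongr) (hCS.trans (by gcongr)) (by positivity) hCΓ
      _ = C * Γ * √A * (n : ℝ) ^ (-b) := by rw [← hpow]; ring
  linarith

/-- Minimum-distance lemma for the slow-fading converse: for all large `n`,
two codewords of power at most `nA` that can be distinguished, uniformly over
all gains `g ∈ 𝒢 ⊆ [−Γ,Γ]`, by a decoding-region family with error sum less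
than `1` must be at Euclidean distance at least
`√(n·ε_n) = √A·n^{-(1+2b)/2}`, where `ε_n = A·n^{-2(1+b)}`. -/
theorem slowFading_minimum_distance
    (A σ Γ : ℝ) (hA : 0 < A) (hσ : 0 < σ) (hΓ : 0 < Γ)
    (𝒢 : Set ℝ) (h𝒢ne : 𝒢.Nonempty) (h𝒢 : 𝒢 ⊆ Set.Icc (-Γ) Γ)
    (lam₁ lam₂ b : ℝ) (hlam₁ : 0 ≤ lam₁) (hlam₂ : 0 ≤ lam₂)
    (hlam : lam₁ + lam₂ < 1) (hb : 0 < b) :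
    ∃ n₀ : ℕ, ∀ n ≥ n₀, ∀ u₁ u₂ : Fin n → ℝ,
      (∑ t, u₁ t ^ 2 ≤ (n : ℝ) * A) → (∑ t, u₂ t ^ 2 ≤ (n : ℝ) * A) →
      ∀ D : ℝ → Set (Fin n → ℝ),
        MeasurableSet {p : ℝ × (Fin n → ℝ) | p.2 ∈ D p.1} →
        (∀ g ∈ 𝒢, 1 - lam₁ ≤ accProbSlow n σ g u₁ D ∧
          accProbSlow n σ g u₂ D ≤ lam₂) →
        Real.sqrt A * (n : ℝ) ^ (-(1 + 2 * b) / 2) ≤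
          Real.sqrt (∑ t, (u₁ t - u₂ t) ^ 2) :=
  slowFading_minimum_distance_general A σ Γ hσ 𝒢 h𝒢ne h𝒢 lam₁ lam₂ b hlam hb
end

section
/- (Slow fading converse, upper bound of the main theorem.) Fix A > 0, σ > 0, Γ > 0, a nonempty set 𝒢 ⊆ [−Γ, Γ], reals λ₁, λ₂ ≥ 0 with λ₁ + λ₂ < 1, and b > 0. Then there exists n₀ such that for all n ≥ n₀ the following holds: if u₁, …, u_M ∈ ℝⁿ satisfy ‖u_i‖² ≤ nA for every i, and there are decoding-region families D^{(1)}, …, D^{(M)} such that for every g ∈ 𝒢 one has P_g(u_i, D^{(i)}) ≥ 1 − λ₁ for every i and P_g(u_i, D^{(j)}) ≤ λ₂ for every ordered pair i ≠ j, then M ≤ (1 + 2·n^{1+b})^n. In particular, the DI capacity of the slow-fading Gaussian channel in the scale L(n,R) = 2^{n·log₂(n)·R} is at most 1. -/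
open MeasureTheory ProbabilityTheory

/-!
Fix a gain `g ∈ 𝒢`. Moving the mean of `N(0, σ²)` by `a` changes the probability of any set by
at most `|a| / σ`, and tensorising this over the coordinates shows that `P_g(x, D)` and
`P_g(y, D)` differ by at most `|g| ‖x - y‖₁ / σ`. The error constraints make `P_g(u_j, D_j)` and
`P_g(u_i, D_j)` differ by at least `ε = 1 - λ₁ - λ₂`, so distinct codewords are `ℓ¹`-separated by
`εσ / |g|`, hence `ℓ²`-separated by `εσ / (|g| √n)`, inside the ball of radius `√(nA)`. Comparing
volumes of disjoint balls gives `M ≤ (1 + 2n √A |g| / (εσ))ⁿ`, which is at most `(1 + 2n^{1+b})ⁿ`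
once `n^b ≥ √A |g| / (εσ)`. For `g = 0` no two codewords can be told apart, so `M ≤ 1`.
-/

open scoped ENNReal NNReal

namespace MeasureTheory

lemma withDensity_apply_le_add_lintegral_tsub {α : Type*} [MeasurableSpace α] {μ : Measure α}
    [SFinite μ] {f g : α → ℝ≥0∞} (hg : Measurable g) (s : Set α) :
    μ.withDensity f s ≤ μ.withDensity g s + ∫⁻ x, f x - g x ∂μ := by
  rw [withDensity_apply' _ s, withDensity_apply' _ s]
  calc ∫⁻ x in s, f x ∂μ ≤ ∫⁻ x in s, g x + (f x - g x) ∂μ :=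
        lintegral_mono fun x => le_add_tsub
    _ = ∫⁻ x in s, g x ∂μ + ∫⁻ x in s, f x - g x ∂μ := lintegral_add_left hg _
    _ ≤ ∫⁻ x in s, g x ∂μ + ∫⁻ x, f x - g x ∂μ :=
        add_le_add_right (setLIntegral_le_lintegral _ _) _

lemma Measure.prod_apply_le_add {α β : Type*} [MeasurableSpace α] [MeasurableSpace β]
    {μ₁ ν₁ : Measure α} {μ₂ ν₂ : Measure β} [IsProbabilityMeasure μ₁] [SFinite ν₁] [SFinite μ₂]
    [IsProbabilityMeasure ν₂] {ε₁ ε₂ : ℝ≥0∞}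
    (h₁ : ∀ s, MeasurableSet s → μ₁ s ≤ ν₁ s + ε₁) (h₂ : ∀ t, MeasurableSet t → μ₂ t ≤ ν₂ t + ε₂)
    {S : Set (α × β)} (hS : MeasurableSet S) :
    μ₁.prod μ₂ S ≤ ν₁.prod ν₂ S + (ε₁ + ε₂) := by
  calc μ₁.prod μ₂ S = ∫⁻ x, μ₂ (Prod.mk x ⁻¹' S) ∂μ₁ := Measure.prod_apply hS
    _ ≤ ∫⁻ x, ν₂ (Prod.mk x ⁻¹' S) + ε₂ ∂μ₁ :=
        lintegral_mono fun x => h₂ _ (measurable_prodMk_left hS)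
    _ = ∫⁻ y, μ₁ ((·, y) ⁻¹' S) ∂ν₂ + ε₂ := by
        rw [lintegral_add_right _ measurable_const, lintegral_const, measure_univ, mul_one,
          ← Measure.prod_apply hS, Measure.prod_apply_symm hS]
    _ ≤ ∫⁻ y, ν₁ ((·, y) ⁻¹' S) + ε₁ ∂ν₂ + ε₂ := by
        gcongr with y
        exact h₁ _ (measurable_prodMk_right hS)
    _ = ν₁.prod ν₂ S + (ε₁ + ε₂) := by
        rw [lintegral_add_right _ measurable_const, lintegral_const, measure_univ, mul_one,
          ← Measure.prod_apply_symm hS, add_assoc]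

lemma Measure.pi_apply_le_add {α : Type*} [MeasurableSpace α] :
    ∀ {n : ℕ} {μ ν : Fin n → Measure α} [∀ i, IsProbabilityMeasure (μ i)]
    [∀ i, IsProbabilityMeasure (ν i)] {ε : Fin n → ℝ≥0∞},
    (∀ i s, MeasurableSet s → μ i s ≤ ν i s + ε i) →
    ∀ {S : Set (Fin n → α)}, MeasurableSet S → Measure.pi μ S ≤ Measure.pi ν S + ∑ i, ε i
  | 0, μ, ν, _, _, ε, _, S, _ => by
    rcases S.eq_empty_or_nonempty with rfl | hS
    · simp
    · simp [hS.eq_univ]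
  | n + 1, μ, ν, _, _, ε, h, S, hS => by
    let e := MeasurableEquiv.piFinSuccAbove (fun _ : Fin (n + 1) => α) 0
    have hμ := (measurePreserving_piFinSuccAbove μ 0).symm e
    have hν := (measurePreserving_piFinSuccAbove ν 0).symm e
    rw [← hμ.measure_preimage_equiv, ← hν.measure_preimage_equiv, Fin.sum_univ_succAbove _ 0]
    exact Measure.prod_apply_le_add (h 0) (fun T hT => pi_apply_le_add (fun i => h _) hT)
      (e.symm.measurable hS)

end MeasureTheory

namespace ProbabilityTheory

section Gaussian

variable {v : ℝ≥0}

lemma gaussianPDFReal_le_inv_sqrt (μ x : ℝ) : gaussianPDFReal μ v x ≤ (√v)⁻¹ := by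
  rw [gaussianPDFReal]
  have hexp : Real.exp (-(x - μ) ^ 2 / (2 * v)) ≤ 1 :=
    Real.exp_le_one_iff.mpr (div_nonpos_of_nonpos_of_nonneg (by nlinarith) (by positivity))
  rcases eq_or_ne (v : ℝ) 0 with hv | hv
  · simp [hv]
  calc (√(2 * Real.pi * v))⁻¹ * Real.exp (-(x - μ) ^ 2 / (2 * v))
      ≤ (√(2 * Real.pi * v))⁻¹ := mul_le_of_le_one_right (by positivity) hexp
    _ ≤ (√v)⁻¹ := by
      gcongr
      nlinarith [Real.pi_gt_three, v.2]

lemma gaussianPDFReal_le_of_abs_sub_le {α β x : ℝ} (h : |x - α| ≤ |x - β|) :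
    gaussianPDFReal β v x ≤ gaussianPDFReal α v x := by
  rw [gaussianPDFReal, gaussianPDFReal]
  gcongr _ * Real.exp ?_
  exact div_le_div_of_nonneg_right (neg_le_neg (sq_le_sq.mpr h)) (by positivity)

lemma gaussianReal_apply_le_mul_volume (μ : ℝ) (hv : v ≠ 0) (s : Set ℝ) :
    gaussianReal μ v s ≤ ENNReal.ofReal (√v)⁻¹ * volume s := by
  rw [gaussianReal_apply μ hv, ← setLIntegral_const]
  exact lintegral_mono fun x => ENNReal.ofReal_le_ofReal (gaussianPDFReal_le_inv_sqrt μ x)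

lemma gaussianReal_Iio_le_add (hv : v ≠ 0) {α β : ℝ} (hαβ : α ≤ β) (m : ℝ) :
    gaussianReal α v (Set.Iio m)
      ≤ gaussianReal β v (Set.Iio m) + ENNReal.ofReal ((β - α) / √v) := by
  have hshift : gaussianReal α v (Set.Iio m) = gaussianReal β v (Set.Iio (m + (β - α))) := by
    rw [← add_sub_cancel α β, ← gaussianReal_map_const_add,
      Measure.map_apply (measurable_const_add _) measurableSet_Iio]
    congr 1
    ext x
    simp
  calc gaussianReal α v (Set.Iio m)
      = gaussianReal β v (Set.Iio m ∪ Set.Ico m (m + (β - α))) := by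
        rw [hshift, Set.Iio_union_Ico_eq_Iio (by linarith)]
    _ ≤ gaussianReal β v (Set.Iio m) + gaussianReal β v (Set.Ico m (m + (β - α))) :=
        measure_union_le _ _
    _ ≤ gaussianReal β v (Set.Iio m) + ENNReal.ofReal ((β - α) / √v) := by
        grw [gaussianReal_apply_le_mul_volume β hv (Set.Ico _ _), Real.volume_Ico,
          ← ENNReal.ofReal_mul (by positivity), add_sub_cancel_left, inv_mul_eq_div]

/- The densities cross at the midpoint of the means, so the positive part of their difference
lives on `Iio ((α + β) / 2)`, where it integrates to a difference of two Gaussian tails. -/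
lemma lintegral_gaussianPDF_tsub_le (hv : v ≠ 0) {α β : ℝ} (hαβ : α ≤ β) :
    ∫⁻ x, gaussianPDF α v x - gaussianPDF β v x ≤ ENNReal.ofReal ((β - α) / √v) := by
  have hzero : ∀ x ∉ Set.Iio ((α + β) / 2), gaussianPDF α v x - gaussianPDF β v x = 0 :=
    fun x hx => tsub_eq_zero_of_le <| ENNReal.ofReal_le_ofReal <|
      gaussianPDFReal_le_of_abs_sub_le <| by
        rw [Set.mem_Iio, not_lt] at hx
        exact sq_le_sq.mp (by nlinarith [mul_nonneg (sub_nonneg.mpr hαβ) (sub_nonneg.mpr hx)])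
  have hle : ∀ x ∈ Set.Iio ((α + β) / 2), gaussianPDF β v x ≤ gaussianPDF α v x :=
    fun x hx => ENNReal.ofReal_le_ofReal <| gaussianPDFReal_le_of_abs_sub_le <| by
      have hx' := (Set.mem_Iio.mp hx).le
      exact sq_le_sq.mp (by nlinarith [mul_nonneg (sub_nonneg.mpr hαβ) (sub_nonneg.mpr hx')])
  calc ∫⁻ x, gaussianPDF α v x - gaussianPDF β v x
      = ∫⁻ x in Set.Iio ((α + β) / 2), gaussianPDF α v x - gaussianPDF β v x :=
        (setLIntegral_eq_of_support_subset fun x hx => by_contra fun h => hx (hzero x h)).symm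
    _ = gaussianReal α v (Set.Iio ((α + β) / 2)) - gaussianReal β v (Set.Iio ((α + β) / 2)) := by
        rw [gaussianReal_apply α hv, gaussianReal_apply β hv]
        refine lintegral_sub (measurable_gaussianPDF β v) ?_ ?_
        · exact ((setLIntegral_le_lintegral _ _).trans_lt
            (by simp [lintegral_gaussianPDF_eq_one β hv])).ne
        · exact (ae_restrict_iff' measurableSet_Iio).mpr (ae_of_all _ hle)
    _ ≤ ENNReal.ofReal ((β - α) / √v) :=
        tsub_le_iff_left.mpr (gaussianReal_Iio_le_add hv hαβ _)

lemma gaussianReal_apply_le_add_of_le (hv : v ≠ 0) {α β : ℝ} (hαβ : α ≤ β) (s : Set ℝ) :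
    gaussianReal α v s ≤ gaussianReal β v s + ENNReal.ofReal ((β - α) / √v) := by
  rw [gaussianReal_of_var_ne_zero _ hv, gaussianReal_of_var_ne_zero _ hv]
  exact (withDensity_apply_le_add_lintegral_tsub (measurable_gaussianPDF β v) s).trans
    (add_le_add_right (lintegral_gaussianPDF_tsub_le hv hαβ) _)

lemma gaussianReal_apply_le_add (hv : v ≠ 0) (α β : ℝ) (s : Set ℝ) :
    gaussianReal α v s ≤ gaussianReal β v s + ENNReal.ofReal (|α - β| / √v) := by
  rcases le_total α β with h | h
  · rw [abs_sub_comm, abs_of_nonneg (sub_nonneg.mpr h)]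
    exact gaussianReal_apply_le_add_of_le hv h s
  · have hneg : ∀ γ, gaussianReal γ v s = gaussianReal (-γ) v (-s) := fun γ => by
      rw [← gaussianReal_map_neg, show (fun x : ℝ => -x) = MeasurableEquiv.neg ℝ from rfl,
        MeasurableEquiv.map_apply]
      simp
    rw [hneg α, hneg β, abs_of_nonneg (sub_nonneg.mpr h)]
    simpa [neg_add_eq_sub] using gaussianReal_apply_le_add_of_le hv (neg_le_neg h) (-s)

variable {n : ℕ}

lemma pi_gaussianReal_preimage_const_add (a : Fin n → ℝ) {S : Set (Fin n → ℝ)}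
    (hS : MeasurableSet S) :
    Measure.pi (fun _ => gaussianReal 0 v) ((a + ·) ⁻¹' S)
      = Measure.pi (fun t => gaussianReal (a t) v) S :=
  (measurePreserving_pi _ _ fun t => ⟨measurable_const_add (a t),
    by simp [gaussianReal_map_const_add]⟩).measure_preimage hS.nullMeasurableSet

lemma pi_gaussianReal_preimage_const_add_le (hv : v ≠ 0) (a c : Fin n → ℝ)
    {S : Set (Fin n → ℝ)} (hS : MeasurableSet S) :
    Measure.pi (fun _ => gaussianReal 0 v) ((a + ·) ⁻¹' S)
      ≤ Measure.pi (fun _ => gaussianReal 0 v) ((c + ·) ⁻¹' S)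
        + ENNReal.ofReal ((∑ t, |a t - c t|) / √v) := by
  rw [pi_gaussianReal_preimage_const_add a hS, pi_gaussianReal_preimage_const_add c hS,
    Finset.sum_div, ENNReal.ofReal_sum_of_nonneg fun t _ => by positivity]
  exact Measure.pi_apply_le_add (fun t s _ => gaussianReal_apply_le_add hv (a t) (c t) s) hS

end Gaussian

end ProbabilityTheory

-- Unlike `⟨σ ^ 2, _⟩` in `gaussPi`, `(σ ^ 2).toNNReal` has type `ℝ≥0` on the nose, so the
-- instances and lemmas about `gaussianReal` apply to it.
lemma gaussPi_eq_pi (n : ℕ) (σ : ℝ) :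
    gaussPi n σ = Measure.pi fun _ : Fin n => gaussianReal 0 (σ ^ 2).toNNReal := by
  rw [gaussPi, Real.toNNReal_of_nonneg (sq_nonneg σ)]
  rfl

lemma accProbSlow_le_add (n : ℕ) {σ : ℝ} (hσ : σ ≠ 0) (g : ℝ) (x y : Fin n → ℝ)
    {D : ℝ → Set (Fin n → ℝ)} (hD : MeasurableSet (D g)) :
    accProbSlow n σ g x D ≤ accProbSlow n σ g y D + |g| / |σ| * ∑ t, |x t - y t| := by
  have hv : (σ ^ 2).toNNReal ≠ 0 := by simpa using hσ
  have hsqrt : √((σ ^ 2).toNNReal : ℝ) = |σ| := by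
    rw [Real.coe_toNNReal _ (sq_nonneg σ), Real.sqrt_sq_eq_abs]
  have hsum : (∑ t, |g * x t - g * y t|) / |σ| = |g| / |σ| * ∑ t, |x t - y t| := by
    simp only [← mul_sub, abs_mul, ← Finset.mul_sum]
    ring
  have key := pi_gaussianReal_preimage_const_add_le hv (g • x) (g • y) hD
  simp only [Pi.smul_apply, smul_eq_mul, hsqrt, hsum] at key
  rw [accProbSlow, accProbSlow, gaussPi_eq_pi,
    ← ENNReal.toReal_ofReal (by positivity : 0 ≤ |g| / |σ| * ∑ t, |x t - y t|)]
  exact ENNReal.toReal_le_add key (measure_ne_top _ _) ENNReal.ofReal_ne_top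

lemma one_sub_sub_mul_abs_le_of_accProbSlow {n : ℕ} {σ g lam₁ lam₂ : ℝ} (hσ : σ ≠ 0)
    {x y : Fin n → ℝ} {D : ℝ → Set (Fin n → ℝ)} (hD : MeasurableSet (D g))
    (h₁ : 1 - lam₁ ≤ accProbSlow n σ g y D) (h₂ : accProbSlow n σ g x D ≤ lam₂) :
    (1 - lam₁ - lam₂) * |σ| ≤ |g| * ∑ t, |x t - y t| := by
  have h := accProbSlow_le_add n hσ g y x hD
  simp only [abs_sub_comm (y _)] at h
  have hε : 1 - lam₁ - lam₂ ≤ |g| / |σ| * ∑ t, |x t - y t| := by linarith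
  rwa [div_mul_eq_mul_div, le_div_iff₀ (abs_pos.mpr hσ)] at hε

theorem card_le_one_add_div_pow_of_pairwise_le_dist {E : Type*} [NormedAddCommGroup E]
    [NormedSpace ℝ E] [FiniteDimensional ℝ E] [Nontrivial E] {ι : Type*} [Fintype ι]
    {v : ι → E} {R r : ℝ} (hR : 0 ≤ R) (hr : 0 < r) (hv : ∀ i, ‖v i‖ ≤ R)
    (hsep : Pairwise fun i j => 2 * r ≤ dist (v i) (v j)) :
    (Fintype.card ι : ℝ) ≤ (1 + R / r) ^ Module.finrank ℝ E := by
  borelize E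
  set μ : Measure E := Measure.addHaar
  set d := Module.finrank ℝ E
  have hball : ∀ x {s : ℝ}, 0 ≤ s →
      μ (Metric.ball x s) = ENNReal.ofReal (s ^ d) * μ (Metric.ball 0 1) :=
    fun x s hs => Measure.addHaar_ball μ x hs
  have hsub : ⋃ i, Metric.ball (v i) r ⊆ Metric.ball 0 (R + r) := by
    refine Set.iUnion_subset fun i x hx => ?_
    rw [Metric.mem_ball] at hx ⊢
    linarith [dist_triangle x (v i) 0, dist_zero_right (v i), hv i]
  have hdisj : Pairwise (Function.onFun Disjoint fun i => Metric.ball (v i) r) :=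
    fun i j hij => Metric.ball_disjoint_ball (by linarith [hsep hij])
  have hvol : (Fintype.card ι : ℝ≥0∞) * ENNReal.ofReal (r ^ d)
      ≤ ENNReal.ofReal ((R + r) ^ d) := by
    have h := measure_mono (μ := μ) hsub
    rw [measure_iUnion hdisj fun _ => measurableSet_ball, tsum_fintype] at h
    simp only [hball _ hr.le, hball _ (by linarith : 0 ≤ R + r), Finset.sum_const,
      Finset.card_univ, nsmul_eq_mul, ← mul_assoc] at h
    exact (ENNReal.mul_le_mul_iff_left (Metric.measure_ball_pos μ 0 one_pos).ne'
      measure_ball_lt_top.ne).mp h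
  rw [← ENNReal.ofReal_natCast, ← ENNReal.ofReal_mul (Nat.cast_nonneg _),
    ENNReal.ofReal_le_ofReal_iff (by positivity)] at hvol
  rwa [one_add_div hr.ne', add_comm, div_pow, le_div_iff₀ (by positivity)]

theorem EuclideanSpace.sum_abs_le_sqrt_card_mul_norm {ι : Type*} [Fintype ι]
    (x : EuclideanSpace ℝ ι) : ∑ i, |x i| ≤ √(Fintype.card ι) * ‖x‖ := by
  rw [← Real.sqrt_sq (norm_nonneg x), ← Real.sqrt_mul (Nat.cast_nonneg _),
    EuclideanSpace.norm_sq_eq]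
  refine (le_abs_self _).trans (Real.abs_le_sqrt ?_)
  simpa using sq_sum_le_card_mul_sum_sq (s := Finset.univ) (f := fun i => |x i|)

theorem card_le_of_sum_sq_le_of_pairwise_le_sum_abs_sub {n : ℕ} (hn : 0 < n) {ι : Type*}
    [Fintype ι] {u : ι → Fin n → ℝ} {A δ : ℝ} (hδ : 0 < δ) (hu : ∀ i, ∑ t, u i t ^ 2 ≤ n * A)
    (hsep : Pairwise fun i j => δ ≤ ∑ t, |u i t - u j t|) :
    (Fintype.card ι : ℝ) ≤ (1 + 2 * n * √A / δ) ^ n := by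
  have : Nonempty (Fin n) := ⟨⟨0, hn⟩⟩
  have hsqrt_n : 0 < √(n : ℝ) := Real.sqrt_pos.mpr (Nat.cast_pos.mpr hn)
  let v i : EuclideanSpace ℝ (Fin n) := WithLp.toLp 2 (u i)
  have hnorm : ∀ i, ‖v i‖ ≤ √(n * A) := fun i => by
    rw [EuclideanSpace.norm_eq]
    exact Real.sqrt_le_sqrt (by simpa [v] using hu i)
  have hdist : Pairwise fun i j => 2 * (δ / (2 * √n)) ≤ dist (v i) (v j) := fun i j hij => by
    have h := (hsep hij).trans (EuclideanSpace.sum_abs_le_sqrt_card_mul_norm (v i - v j))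
    rw [Fintype.card_fin, ← dist_eq_norm] at h
    calc 2 * (δ / (2 * √n)) = δ / √n := by field_simp
      _ ≤ dist (v i) (v j) := (div_le_iff₀' hsqrt_n).mpr h
  have key := card_le_one_add_div_pow_of_pairwise_le_dist (Real.sqrt_nonneg _) (by positivity)
    hnorm hdist
  rw [finrank_euclideanSpace_fin] at key
  convert key using 3
  rw [Real.sqrt_mul (Nat.cast_nonneg _)]
  field_simp
  rw [Real.sq_sqrt (Nat.cast_nonneg _), mul_comm]

theorem slowFading_DI_converse_general
    (A σ : ℝ) (hσ : 0 < σ)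
    (𝒢 : Set ℝ) (h𝒢ne : 𝒢.Nonempty)
    (lam₁ lam₂ b : ℝ)
    (hlam : lam₁ + lam₂ < 1) (hb : 0 < b) :
    ∃ n₀ : ℕ, ∀ n ≥ n₀, ∀ (M : ℕ) (u : Fin M → (Fin n → ℝ))
      (D : Fin M → (ℝ → Set (Fin n → ℝ))),
      (∀ i, ∑ t, u i t ^ 2 ≤ (n : ℝ) * A) →
      (∀ i, MeasurableSet {p : ℝ × (Fin n → ℝ) | p.2 ∈ D i p.1}) →
      (∀ g ∈ 𝒢, ∀ i, 1 - lam₁ ≤ accProbSlow n σ g (u i) (D i)) →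
      (∀ g ∈ 𝒢, ∀ i j, i ≠ j → accProbSlow n σ g (u i) (D j) ≤ lam₂) →
      (M : ℝ) ≤ (1 + 2 * (n : ℝ) ^ ((1 : ℝ) + b)) ^ n := by
  obtain ⟨g, hg⟩ := h𝒢ne
  set ε := 1 - lam₁ - lam₂
  have hε : 0 < ε := by linarith
  obtain ⟨n₀, hn₀⟩ := Filter.eventually_atTop.mp <| (Filter.eventually_ge_atTop 1).and <|
    ((tendsto_rpow_atTop hb).comp tendsto_natCast_atTop_atTop).eventually_ge_atTop
      (√A * |g| / (ε * σ))
  refine ⟨n₀, fun n hn M u D hpow hmeas h₁ h₂ => ?_⟩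
  obtain ⟨hn, hnb : √A * |g| / (ε * σ) ≤ (n : ℝ) ^ b⟩ := hn₀ n hn
  have hsep : Pairwise fun i j => ε * σ ≤ |g| * ∑ t, |u i t - u j t| := fun i j hij =>
    abs_of_pos hσ ▸ one_sub_sub_mul_abs_le_of_accProbSlow hσ.ne'
      ((hmeas j).preimage measurable_prodMk_left) (h₁ g hg j) (h₂ g hg i j hij)
  rcases eq_or_ne g 0 with rfl | hg0
  · have hM : Fintype.card (Fin M) ≤ 1 := Fintype.card_le_one_iff.mpr fun i j =>
      by_contra fun hij => (mul_pos hε hσ).not_ge (by simpa using hsep hij)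
    rw [Fintype.card_fin] at hM
    exact (Nat.cast_le_one.mpr hM).trans (one_le_pow₀ (le_add_of_nonneg_right (by positivity)))
  · have hcard := card_le_of_sum_sq_le_of_pairwise_le_sum_abs_sub hn (δ := ε * σ / |g|)
      (by positivity) hpow fun i j hij => (div_le_iff₀' (abs_pos.mpr hg0)).mpr (hsep hij)
    rw [Fintype.card_fin] at hcard
    refine hcard.trans (pow_le_pow_left₀ (by positivity) ?_ n)
    calc 1 + 2 * n * √A / (ε * σ / |g|) = 1 + 2 * n * (√A * |g| / (ε * σ)) := by field_simp
      _ ≤ 1 + 2 * n * n ^ b := by gcongr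
      _ = 1 + 2 * n ^ (1 + b) := by rw [Real.rpow_add (by positivity), Real.rpow_one, mul_assoc]

/-- Slow fading converse (upper bound of the main theorem): for all large `n`,
any deterministic identification code for the slow-fading Gaussian channel
(with gain set `𝒢 ⊆ [−Γ,Γ]`) with codewords of power at most `nA`, worst-case
type I errors at most `lam₁` and worst-case type II errors at most `lam₂`
(with `lam₁ + lam₂ < 1`) has at most `(1 + 2n^{1+b})^n` messages; hence the DI
capacity in the scale `2^{n·log₂(n)·R}` is at most 1. -/
theorem slowFading_DI_converse
    (A σ Γ : ℝ) (hA : 0 < A) (hσ : 0 < σ) (hΓ : 0 < Γ)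
    (𝒢 : Set ℝ) (h𝒢ne : 𝒢.Nonempty) (h𝒢 : 𝒢 ⊆ Set.Icc (-Γ) Γ)
    (lam₁ lam₂ b : ℝ) (hlam₁ : 0 ≤ lam₁) (hlam₂ : 0 ≤ lam₂)
    (hlam : lam₁ + lam₂ < 1) (hb : 0 < b) :
    ∃ n₀ : ℕ, ∀ n ≥ n₀, ∀ (M : ℕ) (u : Fin M → (Fin n → ℝ))
      (D : Fin M → (ℝ → Set (Fin n → ℝ))),
      (∀ i, ∑ t, u i t ^ 2 ≤ (n : ℝ) * A) →
      (∀ i, MeasurableSet {p : ℝ × (Fin n → ℝ) | p.2 ∈ D i p.1}) →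
      (∀ g ∈ 𝒢, ∀ i, 1 - lam₁ ≤ accProbSlow n σ g (u i) (D i)) →
      (∀ g ∈ 𝒢, ∀ i j, i ≠ j → accProbSlow n σ g (u i) (D j) ≤ lam₂) →
      (M : ℝ) ≤ (1 + 2 * (n : ℝ) ^ ((1 : ℝ) + b)) ^ n :=
  slowFading_DI_converse_general A σ hσ 𝒢 h𝒢ne lam₁ lam₂ b hlam hb
end

section
/- (Zero capacity of the slow-fading channel when zero gain is possible.) Fix σ > 0 and a set 𝒢 ⊆ ℝ with 0 ∈ 𝒢. Then for every n ≥ 1, all vectors u₁, u₂ ∈ ℝⁿ, and every decoding-region family D (sets D_g ⊆ ℝⁿ indexed by g ∈ ℝ with each D_g measurable), one has sup_{g∈𝒢}(1 − P_g(u₁, D)) + sup_{g∈𝒢} P_g(u₂, D) ≥ 1. Consequently, for any DI code with at least two messages the sum of the type I and type II error probabilities is at least 1, and the DI capacity of the slow-fading Gaussian channel is zero (in every scale) when 0 ∈ 𝒢. -/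
/-! At gain `0` the channel output is pure noise, so `P₀(u₁, D) = P₀(u₂, D) = p` for the
noise probability `p` of `D₀`. Since `0 ∈ 𝒢`, the worst-case type I error is at least `1 - p` and
the worst-case type II error at least `p`. -/

open MeasureTheory ProbabilityTheory

theorem le_ciSup₂_of_bddAbove_image {α ι : Type*} [ConditionallyCompleteLattice α]
    {f : ι → α} {s : Set ι} (hf : BddAbove (f '' s)) {i : ι} (hi : i ∈ s) :
    f i ≤ ⨆ j ∈ s, f j := by
  refine le_ciSup₂ (f := fun j _ => f j) ?_ i hi
  obtain ⟨B, hB⟩ := hf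
  exact ⟨B, by rintro _ ⟨_, ⟨j, rfl⟩, ⟨hj, rfl⟩⟩; exact hB ⟨j, hj, rfl⟩⟩

instance (n : ℕ) (σ : ℝ) : IsProbabilityMeasure (gaussPi n σ) := by
  unfold gaussPi
  exact @Measure.pi.instIsProbabilityMeasure _ _ _ _ _ fun _ => instIsProbabilityMeasureGaussianReal _ _

section accProbSlow

variable (n : ℕ) (σ g : ℝ) (u : Fin n → ℝ) (D : ℝ → Set (Fin n → ℝ))

theorem accProbSlow_nonneg : 0 ≤ accProbSlow n σ g u D :=
  ENNReal.toReal_nonneg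

theorem accProbSlow_le_one : accProbSlow n σ g u D ≤ 1 :=
  measureReal_le_one

theorem accProbSlow_zero_gain : accProbSlow n σ 0 u D = (gaussPi n σ (D 0)).toReal := by
  simp only [accProbSlow, zero_mul, zero_add]
  rfl

end accProbSlow

theorem slowFading_zero_gain_sum_errors_ge_one_general
    (σ : ℝ) (𝒢 : Set ℝ) (h0 : (0 : ℝ) ∈ 𝒢)
    (n : ℕ) (u₁ u₂ : Fin n → ℝ)
    (D : ℝ → Set (Fin n → ℝ)) :
    1 ≤ (⨆ g ∈ 𝒢, (1 - accProbSlow n σ g u₁ D)) +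
      ⨆ g ∈ 𝒢, accProbSlow n σ g u₂ D := by
  have htypeI : 1 - (gaussPi n σ (D 0)).toReal ≤ ⨆ g ∈ 𝒢, (1 - accProbSlow n σ g u₁ D) := by
    have hbdd : BddAbove ((fun g => 1 - accProbSlow n σ g u₁ D) '' 𝒢) :=
      ⟨1, by rintro _ ⟨g, -, rfl⟩; linarith [accProbSlow_nonneg n σ g u₁ D]⟩
    simpa only [accProbSlow_zero_gain] using le_ciSup₂_of_bddAbove_image hbdd h0
  have htypeII : (gaussPi n σ (D 0)).toReal ≤ ⨆ g ∈ 𝒢, accProbSlow n σ g u₂ D := by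
    have hbdd : BddAbove ((fun g => accProbSlow n σ g u₂ D) '' 𝒢) :=
      ⟨1, by rintro _ ⟨g, -, rfl⟩; exact accProbSlow_le_one n σ g u₂ D⟩
    simpa only [accProbSlow_zero_gain] using le_ciSup₂_of_bddAbove_image hbdd h0
  linarith

/-- If the zero gain is a possible fading value (`0 ∈ 𝒢`), then for any two
codewords and any decoding-region family, the worst-case type I error for the
first codeword plus the worst-case type II error for the second is at least
`1`; hence the DI capacity of the slow-fading Gaussian channel is zero. -/
theorem slowFading_zero_gain_sum_errors_ge_one
    (σ : ℝ) (hσ : 0 < σ) (𝒢 : Set ℝ) (h0 : (0 : ℝ) ∈ 𝒢)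
    (n : ℕ) (hn : 1 ≤ n) (u₁ u₂ : Fin n → ℝ)
    (D : ℝ → Set (Fin n → ℝ)) (hD : ∀ g : ℝ, MeasurableSet (D g)) :
    1 ≤ (⨆ g ∈ 𝒢, (1 - accProbSlow n σ g u₁ D)) +
      ⨆ g ∈ 𝒢, accProbSlow n σ g u₂ D :=
  slowFading_zero_gain_sum_errors_ge_one_general σ 𝒢 h0 n u₁ u₂ D
end
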